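/- arXiv:2501.00424 — 7 statements merged into one kernel-verified Lean document; each statement's English description precedes it below -/
import Mathlib

section
/- For 0 < s < 2, the double integral (1/4)∫_{-1}^{1}∫_{-1}^{1} (1-xy)^{-s/2} dx dy equals the generalized hypergeometric value ₃F₂(1/2, s/4+1/2, s/4; 3/2, 3/2; 1). -/
/-!
Expanding `(1 - x y) ^ (-s/2)` by the binomial series `∑ (s/2)ₖ / k! (x y)ᵏ` and integrating
termwise turns the double integral into `∑ₖ (s/2)ₖ / k! · (∫₋₁¹ yᵏ dy)²`. Odd moments vanish and
`∫₋₁¹ y²ᵐ dy = 2 / (2m + 1)`; Legendre's duplication `(2a)₂ₘ = 4ᵐ (a)ₘ (a + 1/2)ₘ`, together with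
`(2m)! = 4ᵐ m! (1/2)ₘ` and `(3/2)ₘ = (2m + 1) (1/2)ₘ`, identifies the even terms with those of the
₃F₂ series. In `y` the interchange is dominated convergence (`|x y| ≤ |x| < 1`); in `x` the terms
are nonnegative, and `(s/2)ₖ / k! ≤ 1` for `s ≤ 2` bounds their integrals by `4 / (k + 1)²`.
-/

open MeasureTheory

/-- The generalized hypergeometric function ₃F₂ as a series. -/
noncomputable def hyp3F2 (a₁ a₂ a₃ b₁ b₂ z : ℝ) : ℝ :=
  ∑' k : ℕ,
    ((ascPochhammer ℝ k).eval a₁ * (ascPochhammer ℝ k).eval a₂ * (ascPochhammer ℝ k).eval a₃) /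
      ((ascPochhammer ℝ k).eval b₁ * (ascPochhammer ℝ k).eval b₂ * (k.factorial : ℝ)) * z ^ k

open Set
open scoped Nat Interval

lemma Ring.multichoose_eq_ascPochhammer_eval_div_factorial {K : Type*} [Field K] [CharZero K]
    (r : K) (n : ℕ) : Ring.multichoose r n = (ascPochhammer K n).eval r / n ! := by
  rw [eq_div_iff (Nat.cast_ne_zero.2 n.factorial_ne_zero), mul_comm, ← nsmul_eq_mul,
    Ring.factorial_nsmul_multichoose_eq_ascPochhammer, Polynomial.ascPochhammer_smeval_eq_eval]

lemma hasSum_ascPochhammer_div_factorial_mul_pow (r : ℝ) {t : ℝ} (ht : |t| < 1) :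
    HasSum (fun k => (ascPochhammer ℝ k).eval r / k ! * t ^ k) ((1 - t) ^ (-r)) := by
  have h := (Real.one_div_one_sub_rpow_hasFPowerSeriesOnBall_zero r).hasSum (y := t)
    (by simpa [enorm_eq_nnnorm, ← NNReal.coe_lt_coe] using ht)
  simp only [FormalMultilinearSeries.ofScalars_apply_eq, zero_add, smul_eq_mul] at h
  rw [Real.rpow_neg (by linarith [abs_lt.1 ht]), ← one_div]
  refine h.congr_fun fun k => ?_
  rw [← Ring.multichoose_eq, Ring.multichoose_eq_ascPochhammer_eval_div_factorial]

lemma ascPochhammer_eval_le_of_le {S : Type*} [Semiring S] [PartialOrder S] [IsStrictOrderedRing S]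
    {a b : S} (ha : 0 < a) (hab : a ≤ b) (n : ℕ) :
    (ascPochhammer S n).eval a ≤ (ascPochhammer S n).eval b := by
  induction n with
  | zero => simp
  | succ n ih =>
    simp only [ascPochhammer_succ_eval]
    have := ascPochhammer_pos n b (ha.trans_le hab)
    gcongr

lemma ascPochhammer_eval_div_factorial_nonneg {r : ℝ} (hr : 0 < r) (n : ℕ) :
    0 ≤ (ascPochhammer ℝ n).eval r / n ! :=
  div_nonneg (ascPochhammer_pos n r hr).le (by positivity)

lemma ascPochhammer_eval_div_factorial_le_one {r : ℝ} (hr0 : 0 < r) (hr1 : r ≤ 1) (n : ℕ) :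
    (ascPochhammer ℝ n).eval r / n ! ≤ 1 :=
  div_le_one_of_le₀ (by simpa using ascPochhammer_eval_le_of_le hr0 hr1 n) (by positivity)

lemma ascPochhammer_eval_two_mul {K : Type*} [Field K] [CharZero K] (x : K) (m : ℕ) :
    (ascPochhammer K (2 * m)).eval (2 * x)
      = 4 ^ m * (ascPochhammer K m).eval x * (ascPochhammer K m).eval (x + 1 / 2) := by
  induction m with
  | zero => simp
  | succ m ih =>
    rw [show 2 * (m + 1) = 2 * m + 1 + 1 by ring, ascPochhammer_succ_eval, ascPochhammer_succ_eval,
      ih, ascPochhammer_succ_eval, ascPochhammer_succ_eval]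
    push_cast
    ring

lemma mul_ascPochhammer_eval_add_one {S : Type*} [CommSemiring S] (x : S) (n : ℕ) :
    x * (ascPochhammer S n).eval (x + 1) = (ascPochhammer S n).eval x * (x + n) := by
  rw [← ascPochhammer_succ_eval, ascPochhammer_succ_left]
  simp

lemma hyp3F2_coeff_eq (x : ℝ) (m : ℕ) :
    (ascPochhammer ℝ m).eval (1 / 2) * (ascPochhammer ℝ m).eval (x + 1 / 2)
        * (ascPochhammer ℝ m).eval x
        / ((ascPochhammer ℝ m).eval (3 / 2) * (ascPochhammer ℝ m).eval (3 / 2) * m !)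
      = (ascPochhammer ℝ (2 * m)).eval (2 * x) / (2 * m)! / (2 * m + 1) ^ 2 := by
  have hfact : ((2 * m)! : ℝ) = 4 ^ m * (ascPochhammer ℝ m).eval (1 / 2) * m ! := by
    have := ascPochhammer_eval_two_mul (1 / 2 : ℝ) m
    norm_num at this
    exact this
  have hthree :
      (ascPochhammer ℝ m).eval (3 / 2) = (2 * m + 1) * (ascPochhammer ℝ m).eval (1 / 2) := by
    have := mul_ascPochhammer_eval_add_one (1 / 2 : ℝ) m
    norm_num at this
    linarith
  have hhalf := ascPochhammer_pos m (1 / 2 : ℝ) (by norm_num)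
  rw [ascPochhammer_eval_two_mul, hfact, hthree]
  field_simp

lemma integral_pow_two_mul (m : ℕ) : ∫ y in (-1 : ℝ)..1, y ^ (2 * m) = 2 / (2 * m + 1) := by
  rw [integral_pow, Odd.neg_one_pow ⟨m, rfl⟩]
  norm_num

lemma integral_pow_two_mul_add_one (m : ℕ) : ∫ y in (-1 : ℝ)..1, y ^ (2 * m + 1) = 0 := by
  rw [integral_pow, Even.neg_one_pow ⟨m + 1, by ring⟩]
  norm_num

lemma integral_pow_nonneg (k : ℕ) : 0 ≤ ∫ y in (-1 : ℝ)..1, y ^ k := by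
  obtain ⟨m, rfl | rfl⟩ := Nat.even_or_odd' k
  · rw [integral_pow_two_mul]; positivity
  · rw [integral_pow_two_mul_add_one]

lemma integral_pow_le (k : ℕ) : ∫ y in (-1 : ℝ)..1, y ^ k ≤ 2 / (k + 1) := by
  obtain ⟨m, rfl | rfl⟩ := Nat.even_or_odd' k
  · rw [integral_pow_two_mul]; push_cast; exact le_rfl
  · rw [integral_pow_two_mul_add_one]; positivity

lemma integral_pow_mul_pow_nonneg (k : ℕ) (x : ℝ) : 0 ≤ (∫ y in (-1 : ℝ)..1, y ^ k) * x ^ k := by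
  obtain ⟨m, rfl | rfl⟩ := Nat.even_or_odd' k
  · rw [integral_pow_two_mul, pow_mul]; positivity
  · rw [integral_pow_two_mul_add_one, zero_mul]

lemma hasSum_integral_one_sub_mul_rpow_neg {r : ℝ} (hr : 0 < r) {x : ℝ} (hx : |x| < 1) :
    HasSum (fun k => (ascPochhammer ℝ k).eval r / k ! * x ^ k * ∫ y in (-1 : ℝ)..1, y ^ k)
      (∫ y in (-1 : ℝ)..1, (1 - x * y) ^ (-r)) := by
  have habs : ∀ y ∈ Ι (-1 : ℝ) 1, |y| ≤ 1 := fun y hy => by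
    rw [uIoc_of_le (by norm_num)] at hy
    exact abs_le.2 ⟨hy.1.le, hy.2⟩
  simp_rw [← intervalIntegral.integral_const_mul]
  refine intervalIntegral.hasSum_integral_of_dominated_convergence
    (fun k _ => (ascPochhammer ℝ k).eval r / k ! * |x| ^ k)
    (fun k => (by fun_prop : Continuous _).aestronglyMeasurable) (fun k => ae_of_all _ ?_)
    (ae_of_all _ fun _ _ => (hasSum_ascPochhammer_div_factorial_mul_pow r
      (by rwa [abs_abs])).summable)
    intervalIntegrable_const (ae_of_all _ fun y hy => ?_)
  · intro y hy
    have hc := ascPochhammer_eval_div_factorial_nonneg hr k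
    simp only [norm_mul, norm_pow, Real.norm_eq_abs, abs_of_nonneg hc]
    exact mul_le_of_le_one_right (by positivity) (pow_le_one₀ (abs_nonneg y) (habs y hy))
  · have hxy : |x * y| < 1 := by
      rw [abs_mul]
      exact mul_lt_one_of_nonneg_of_lt_one_left (abs_nonneg x) hx (habs y hy)
    simpa only [mul_pow, mul_assoc] using hasSum_ascPochhammer_div_factorial_mul_pow r hxy

lemma summable_ascPochhammer_div_factorial_mul_integral_pow_sq {r : ℝ} (hr0 : 0 < r)
    (hr1 : r ≤ 1) :
    Summable fun k => (ascPochhammer ℝ k).eval r / k ! * (∫ y in (-1 : ℝ)..1, y ^ k) ^ 2 := by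
  have hsq : Summable fun k : ℕ => 4 / ((k : ℝ) + 1) ^ 2 := by
    simpa [div_eq_mul_inv] using
      ((summable_nat_add_iff 1).mpr (Real.summable_one_div_nat_pow.mpr one_lt_two)).mul_left 4
  refine hsq.of_nonneg_of_le (fun k => ?_) (fun k => ?_)
  · exact mul_nonneg (ascPochhammer_eval_div_factorial_nonneg hr0 k) (sq_nonneg _)
  · calc (ascPochhammer ℝ k).eval r / k ! * (∫ y in (-1 : ℝ)..1, y ^ k) ^ 2
        ≤ 1 * (2 / (k + 1)) ^ 2 := by
          gcongr
          · exact ascPochhammer_eval_div_factorial_le_one hr0 hr1 k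
          · exact integral_pow_nonneg k
          · exact integral_pow_le k
      _ = 4 / ((k : ℝ) + 1) ^ 2 := by rw [div_pow]; norm_num

lemma hasSum_integral_integral_one_sub_mul_rpow_neg {r : ℝ} (hr0 : 0 < r) (hr1 : r ≤ 1) :
    HasSum (fun k => (ascPochhammer ℝ k).eval r / k ! * (∫ y in (-1 : ℝ)..1, y ^ k) ^ 2)
      (∫ x in (-1 : ℝ)..1, ∫ y in (-1 : ℝ)..1, (1 - x * y) ^ (-r)) := by
  set c : ℕ → ℝ := fun k => (ascPochhammer ℝ k).eval r / (k ! : ℝ)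
  set M : ℕ → ℝ := fun k => ∫ y in (-1 : ℝ)..1, y ^ k
  have hIoo (f : ℝ → ℝ) : ∫ x in (-1 : ℝ)..1, f x = ∫ x in Ioo (-1 : ℝ) 1, f x := by
    rw [intervalIntegral.integral_of_le (by norm_num), integral_Ioc_eq_integral_Ioo]
  have hinner : EqOn (fun x => ∫ y in (-1 : ℝ)..1, (1 - x * y) ^ (-r))
      (fun x => ∑' k, c k * M k * x ^ k) (Ioo (-1) 1) := fun x hx => by
    simp only [← (hasSum_integral_one_sub_mul_rpow_neg hr0 (abs_lt.2 hx)).tsum_eq]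
    exact tsum_congr fun k => by ring
  have hint (k : ℕ) : IntegrableOn (fun x => c k * M k * x ^ k) (Ioo (-1) 1) :=
    (by fun_prop : Continuous _).integrableOn_Icc.mono_set Ioo_subset_Icc_self
  have hterm (k : ℕ) : ∫ x in Ioo (-1 : ℝ) 1, c k * M k * x ^ k = c k * M k ^ 2 := by
    rw [integral_const_mul, ← hIoo]
    ring
  have hnorm (k : ℕ) : ∫ x in Ioo (-1 : ℝ) 1, ‖c k * M k * x ^ k‖ = c k * M k ^ 2 := by
    rw [← hterm]
    refine setIntegral_congr_fun measurableSet_Ioo fun x _ => Real.norm_of_nonneg ?_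
    rw [mul_assoc]
    exact mul_nonneg (ascPochhammer_eval_div_factorial_nonneg hr0 k)
      (integral_pow_mul_pow_nonneg k x)
  rw [hIoo, setIntegral_congr_fun measurableSet_Ioo hinner]
  simpa only [hterm] using hasSum_integral_of_summable_integral_norm hint
    (by simpa only [hnorm] using summable_ascPochhammer_div_factorial_mul_integral_pow_sq hr0 hr1)

theorem riesz_energy_eq_hyp3F2 (s : ℝ) (hs0 : 0 < s) (hs2 : s < 2) :
    (1/4) * ∫ x in (-1:ℝ)..1, ∫ y in (-1:ℝ)..1, (1 - x*y) ^ (-(s/2))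
      = hyp3F2 (1/2) (s/4 + 1/2) (s/4) (3/2) (3/2) 1 := by
  have hsum := (hasSum_integral_integral_one_sub_mul_rpow_neg (r := s / 2) (by linarith)
    (by linarith)).mul_left (1 / 4)
  have hodd : ∀ k ∉ range (2 * ·), (1 / 4 : ℝ) * ((ascPochhammer ℝ k).eval (s / 2) / k ! *
      (∫ y in (-1 : ℝ)..1, y ^ k) ^ 2) = 0 := by
    intro k hk
    obtain ⟨m, rfl⟩ : Odd k :=
      Nat.not_even_iff_odd.1 fun ⟨m, hm⟩ => hk ⟨m, show 2 * m = k by omega⟩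
    rw [integral_pow_two_mul_add_one]
    simp
  rw [← (mul_right_injective₀ two_ne_zero).hasSum_iff hodd] at hsum
  rw [← hsum.tsum_eq, hyp3F2]
  refine tsum_congr fun m => ?_
  rw [Function.comp_apply, integral_pow_two_mul, one_pow, mul_one, hyp3F2_coeff_eq,
    show s / 2 = 2 * (s / 4) by ring]
  field_simp
  ring
end

section
/- The double integral -(1/8)∫_{-1}^{1}∫_{-1}^{1} log(1-xy) dx dy equals 1 - π²/16 - (log 2)/2. -/
/-!
Expanding `log (1 - x y) = -∑ (x y)ⁿ / n` and integrating termwise twice (dominated convergence)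
turns the double integral into `-∑ mₙ² / n` with the moments `mₙ = ∫₋₁¹ tⁿ dt`, which vanish for
odd `n` and equal `2 / (n + 1)` for even `n`. Partial fractions split what remains into
`∑ 1 / (2k + 3)²`, known from `ζ(2) = π² / 6`, and `∑ 1 / ((2k + 2)(2k + 3)) = 1 - log 2`, whose
partial sums are `1 + H_N - H_{2N+1}`.
-/

open MeasureTheory Real Filter Finset Topology Interval

lemma hasSum_one_div_odd_sq : HasSum (fun m : ℕ => 1 / (2 * m + 1 : ℝ) ^ 2) (π ^ 2 / 8) := by
  have hzeta := hasSum_zeta_two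
  have heven : HasSum (fun m : ℕ => 1 / ((2 * m : ℕ) : ℝ) ^ 2) (π ^ 2 / 24) := by
    rw [show π ^ 2 / 24 = 1 / 4 * (π ^ 2 / 6) by ring]
    refine (hzeta.mul_left (1 / 4)).congr_fun fun m => ?_
    push_cast
    ring
  obtain ⟨s, hodd⟩ := hzeta.summable.comp_injective (i := fun m : ℕ => 2 * m + 1)
    (fun a b h => by simpa using h)
  have hs : s = π ^ 2 / 8 := by
    linarith [hzeta.unique (heven.even_add_odd (f := fun n : ℕ => 1 / (n : ℝ) ^ 2) hodd)]
  subst hs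
  exact hodd.congr_fun fun m => by simp

lemma sum_range_one_div_even_mul_odd (N : ℕ) :
    ∑ k ∈ range N, 1 / ((2 * k + 2) * (2 * k + 3) : ℝ) = 1 + harmonic N - harmonic (2 * N + 1) := by
  induction N with
  | zero => simp
  | succ N ih =>
    rw [sum_range_succ, ih, show 2 * (N + 1) + 1 = 2 * N + 1 + 1 + 1 by ring,
      harmonic_succ (2 * N + 1 + 1), harmonic_succ (2 * N + 1), harmonic_succ N]
    push_cast
    field_simp
    ring

lemma tendsto_harmonic_two_mul_add_one_sub_harmonic :
    Tendsto (fun N : ℕ => (harmonic (2 * N + 1) : ℝ) - harmonic N) atTop (𝓝 (log 2)) := by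
  have hodd : Tendsto (fun N : ℕ => (harmonic (2 * N + 1) : ℝ) - log (2 * N + 1)) atTop
      (𝓝 eulerMascheroniConstant) := by
    have h2 : Tendsto (fun N : ℕ => 2 * N + 1) atTop atTop :=
      tendsto_atTop_mono (fun N => by dsimp; omega) tendsto_id
    convert tendsto_harmonic_sub_log.comp h2 using 2 with N
    simp
  have hlog : Tendsto (fun N : ℕ => log (2 + 1 / N)) atTop (𝓝 (log 2)) := by
    simpa using ((tendsto_one_div_atTop_nhds_zero_nat.const_add 2).log (by norm_num))
  have := (hodd.sub tendsto_harmonic_sub_log).add hlog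
  rw [sub_self, zero_add] at this
  refine this.congr' ?_
  filter_upwards [eventually_gt_atTop 0] with N hN
  rw [show (2 : ℝ) + 1 / N = (2 * N + 1) / N by field_simp, log_div (by positivity) (by positivity)]
  ring

lemma hasSum_one_div_even_mul_odd :
    HasSum (fun k : ℕ => 1 / ((2 * k + 2) * (2 * k + 3) : ℝ)) (1 - log 2) := by
  have hsummable : Summable (fun k : ℕ => 1 / ((2 * k + 2) * (2 * k + 3) : ℝ)) := by
    refine (summable_nat_add_iff 1 |>.2 <| summable_one_div_nat_pow.2 one_lt_two).of_nonneg_of_le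
      (fun k => by positivity) (fun k => ?_)
    gcongr
    push_cast
    nlinarith
  rw [hsummable.hasSum_iff_tendsto_nat]
  convert tendsto_harmonic_two_mul_add_one_sub_harmonic.const_sub 1 using 2 with N
  rw [sum_range_one_div_even_mul_odd]
  ring

lemma integral_pow_neg_one_one (n : ℕ) :
    ∫ t in (-1 : ℝ)..1, t ^ n = (1 - (-1) ^ (n + 1)) / (n + 1) := by
  simp [integral_pow]

lemma integral_pow_neg_one_one_of_even {n : ℕ} (hn : Even n) :
    ∫ t in (-1 : ℝ)..1, t ^ n = 2 / (n + 1) := by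
  rw [integral_pow_neg_one_one, hn.add_one.neg_one_pow]
  norm_num

lemma integral_pow_neg_one_one_of_odd {n : ℕ} (hn : Odd n) : ∫ t in (-1 : ℝ)..1, t ^ n = 0 := by
  rw [integral_pow_neg_one_one, hn.add_one.neg_one_pow]
  norm_num

lemma abs_integral_pow_neg_one_one_le (n : ℕ) : |∫ t in (-1 : ℝ)..1, t ^ n| ≤ 2 / (n + 1) := by
  rcases n.even_or_odd with hn | hn
  · rw [integral_pow_neg_one_one_of_even hn, abs_of_nonneg (by positivity)]
  · rw [integral_pow_neg_one_one_of_odd hn, abs_zero]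
    positivity

lemma hasSum_mul_integral_pow_of_summable_abs {c : ℕ → ℝ} {f : ℝ → ℝ}
    (hc : Summable fun n => |c n|)
    (hf : ∀ᵐ t, t ∈ Ι (-1 : ℝ) 1 → HasSum (fun n => c n * t ^ n) (f t)) :
    HasSum (fun n => c n * ∫ t in (-1 : ℝ)..1, t ^ n) (∫ t in (-1 : ℝ)..1, f t) := by
  have hbound : ∀ n, ∀ t ∈ Ι (-1 : ℝ) 1, ‖c n * t ^ n‖ ≤ |c n| := fun n t ht => by
    rw [Set.uIoc_of_le (by norm_num)] at ht
    have ht' : |t| ≤ 1 := abs_le.2 ⟨ht.1.le, ht.2⟩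
    rw [norm_mul, norm_pow, Real.norm_eq_abs, Real.norm_eq_abs]
    exact mul_le_of_le_one_right (abs_nonneg _) (pow_le_one₀ (abs_nonneg t) ht')
  simpa only [← intervalIntegral.integral_const_mul] using
    intervalIntegral.hasSum_integral_of_dominated_convergence (fun n _ => |c n|)
      (fun n => (by fun_prop : Continuous fun t : ℝ => c n * t ^ n).aestronglyMeasurable)
      (fun n => ae_of_all _ (hbound n)) (ae_of_all _ fun _ _ => hc) intervalIntegrable_const hf

-- The `n = 0` term is `-(1 / 0) = 0` in Lean.
lemma hasSum_neg_pow_div_log_one_sub {z : ℝ} (hz : |z| < 1) :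
    HasSum (fun n : ℕ => -(z ^ n / n)) (log (1 - z)) := by
  refine (hasSum_nat_add_iff' 1).mp ?_
  simpa [neg_div] using (hasSum_pow_div_log_of_abs_lt_one hz).neg

lemma hasSum_integral_log_one_sub_mul {x : ℝ} (hx : |x| < 1) :
    HasSum (fun n : ℕ => -(x ^ n / n) * ∫ y in (-1 : ℝ)..1, y ^ n)
      (∫ y in (-1 : ℝ)..1, log (1 - x * y)) := by
  refine hasSum_mul_integral_pow_of_summable_abs ?_ (ae_of_all _ fun y hy => ?_)
  · refine (summable_geometric_of_lt_one (abs_nonneg x) hx).of_nonneg_of_le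
      (fun n => abs_nonneg _) (fun n => ?_)
    rw [abs_neg, abs_div, abs_pow, Nat.abs_cast]
    rcases n.eq_zero_or_pos with rfl | hn
    · simp
    · exact div_le_self (by positivity) (by exact_mod_cast hn)
  · rw [Set.uIoc_of_le (by norm_num)] at hy
    have hxy : |x * y| < 1 := by
      rw [abs_mul]
      exact mul_lt_one_of_nonneg_of_lt_one_left (abs_nonneg x) hx (abs_le.2 ⟨hy.1.le, hy.2⟩)
    exact (hasSum_neg_pow_div_log_one_sub hxy).congr_fun fun n => by ring

lemma hasSum_integral_integral_log_one_sub_mul :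
    HasSum (fun n : ℕ => -((∫ t in (-1 : ℝ)..1, t ^ n) / n) * ∫ t in (-1 : ℝ)..1, t ^ n)
      (∫ x in (-1 : ℝ)..1, ∫ y in (-1 : ℝ)..1, log (1 - x * y)) := by
  refine hasSum_mul_integral_pow_of_summable_abs ?_ ?_
  · refine ((summable_one_div_nat_pow.2 one_lt_two).mul_left 2).of_nonneg_of_le
      (fun n => abs_nonneg _) (fun n => ?_)
    rw [abs_neg, abs_div, Nat.abs_cast]
    rcases n.eq_zero_or_pos with rfl | hn
    · simp
    · have hn' : (0 : ℝ) < n := by exact_mod_cast hn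
      calc |∫ t in (-1 : ℝ)..1, t ^ n| / n ≤ 2 / (n + 1) / n := by
            gcongr; exact abs_integral_pow_neg_one_one_le n
        _ ≤ 2 / n / n := by gcongr; linarith
        _ = 2 * (1 / (n : ℝ) ^ 2) := by ring
  · filter_upwards [Measure.ae_ne volume 1] with x hx1 hx
    rw [Set.uIoc_of_le (by norm_num)] at hx
    have hx' : |x| < 1 := abs_lt.2 ⟨hx.1, lt_of_le_of_ne hx.2 hx1⟩
    exact (hasSum_integral_log_one_sub_mul hx').congr_fun fun n => by ring

lemma hasSum_neg_integral_pow_div_mul_integral_pow :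
    HasSum (fun n : ℕ => -((∫ t in (-1 : ℝ)..1, t ^ n) / n) * ∫ t in (-1 : ℝ)..1, t ^ n)
      (π ^ 2 / 2 + 4 * log 2 - 8) := by
  have hodd_sq : HasSum (fun k : ℕ => 1 / (2 * k + 3 : ℝ) ^ 2) (π ^ 2 / 8 - 1) := by
    have h : HasSum (fun k : ℕ => 1 / (2 * ((k + 1 : ℕ) : ℝ) + 1) ^ 2) (π ^ 2 / 8 - 1) := by
      simpa using (hasSum_nat_add_iff' 1).mpr hasSum_one_div_odd_sq
    exact h.congr_fun fun k => by push_cast; ring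
  -- Only `n = 2k + 2` contributes, with `-4 / ((2k+2)(2k+3)²) = 4 / (2k+3)² - 4 / ((2k+2)(2k+3))`.
  rw [← (Function.Injective.hasSum_iff (mul_right_injective₀ two_ne_zero) ?_)]
  · refine (hasSum_nat_add_iff' 1).mp ?_
    have h := (hodd_sq.mul_left 4).sub (hasSum_one_div_even_mul_odd.mul_left 4)
    convert h using 1
    · ext k
      simp only [Function.comp, integral_pow_neg_one_one_of_even (even_two_mul (k + 1))]
      push_cast
      field_simp
      ring
    · rw [sum_range_one]
      simp only [Function.comp_apply, mul_zero, Nat.cast_zero, div_zero, neg_zero, zero_mul,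
        sub_zero]
      ring
  · rintro n hn
    have hodd : Odd n := Nat.not_even_iff_odd.1 fun ⟨m, hm⟩ => hn ⟨m, by simp [hm, two_mul]⟩
    simp [integral_pow_neg_one_one_of_odd hodd]

theorem log_energy_integral :
    -(1/8) * ∫ x in (-1:ℝ)..1, ∫ y in (-1:ℝ)..1, Real.log (1 - x*y)
      = 1 - Real.pi^2/16 - Real.log 2 / 2 := by
  rw [hasSum_integral_integral_log_one_sub_mul.unique hasSum_neg_integral_pow_div_mul_integral_pow]
  ring
end

section
/- As δ → 0⁺, the quantity (1/4)∫_{-1}^{1}∫_{-1}^{1} (1-xy+δ)^{-2} dx dy equals -(1/2) log δ + (1/2) log 2 + o(1). -/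
/-!
Both integrations are elementary. For `|x| < s`, `y ↦ y / (s (s - x y))` is an antiderivative
of `(s - x y)⁻²`, so with `s = 1 + δ` the inner integral is `2 / (s² - x²)`, and its integral
over `[-1, 1]` is `(2 / s) (log (s + 1) - log (s - 1))`. The normalised double integral thus
equals `-(1/2) log δ + (log (2 + δ) + δ log δ) / (2 (1 + δ))`, and `δ log δ → 0`.
-/

open Filter Real Topology

lemma abs_le_one_of_mem_uIcc {y : ℝ} (hy : y ∈ Set.uIcc (-1 : ℝ) 1) : |y| ≤ 1 := by
  rw [Set.uIcc_of_le (by norm_num)] at hy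
  exact abs_le.2 hy

lemma hasDerivAt_div_mul_sub_mul {s x y : ℝ} (hs : s ≠ 0) (hxy : s - x * y ≠ 0) :
    HasDerivAt (fun y => y / (s * (s - x * y))) (1 / (s - x * y) ^ 2) y := by
  have hden : HasDerivAt (fun y => s * (s - x * y)) (s * -x) y := by
    simpa using (((hasDerivAt_id' y).const_mul x).const_sub s).const_mul s
  refine ((hasDerivAt_id' y).fun_div hden (mul_ne_zero hs hxy)).congr_deriv ?_
  field_simp
  ring

lemma integral_one_div_sub_mul_sq {s x : ℝ} (hx : |x| < s) :
    ∫ y in (-1 : ℝ)..1, 1 / (s - x * y) ^ 2 = 2 / (s ^ 2 - x ^ 2) := by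
  have hpos : ∀ y ∈ Set.uIcc (-1 : ℝ) 1, 0 < s - x * y := fun y hy => by
    have hxy : |x * y| ≤ |x| := by
      simpa [abs_mul] using mul_le_mul_of_nonneg_left (abs_le_one_of_mem_uIcc hy) (abs_nonneg x)
    linarith [le_abs_self (x * y)]
  have hs : s ≠ 0 := ((abs_nonneg x).trans_lt hx).ne'
  rw [intervalIntegral.integral_eq_sub_of_hasDerivAt
    (fun y hy => hasDerivAt_div_mul_sub_mul hs (hpos y hy).ne')
    (ContinuousOn.intervalIntegrable (continuousOn_const.div (by fun_prop)
      fun y hy => pow_ne_zero 2 (hpos y hy).ne'))]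
  obtain ⟨hx₁, hx₂⟩ := abs_lt.1 hx
  have h₁ : s - x ≠ 0 := by linarith
  have h₂ : s + x ≠ 0 := by linarith
  have h₃ : s ^ 2 - x ^ 2 ≠ 0 := by
    rw [sq_sub_sq]; exact mul_ne_zero h₂ h₁
  simp only [mul_one, mul_neg, sub_neg_eq_add]
  field_simp
  ring

lemma hasDerivAt_log_add_sub_log_sub_div {s x : ℝ} (hx : |x| < s) :
    HasDerivAt (fun x => (log (s + x) - log (s - x)) / s) (2 / (s ^ 2 - x ^ 2)) x := by
  obtain ⟨hx₁, hx₂⟩ := abs_lt.1 hx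
  have h₁ : s + x ≠ 0 := by linarith
  have h₂ : s - x ≠ 0 := by linarith
  have hlog₁ : HasDerivAt (fun x => log (s + x)) (1 / (s + x)) x := by
    simpa using ((hasDerivAt_id' x).const_add s).log h₁
  have hlog₂ : HasDerivAt (fun x => log (s - x)) (-1 / (s - x)) x := by
    simpa using ((hasDerivAt_id' x).const_sub s).log h₂
  refine ((hlog₁.sub hlog₂).div_const s).congr_deriv ?_
  have hs : s ≠ 0 := by linarith
  have h₃ : s ^ 2 - x ^ 2 ≠ 0 := by
    rw [sq_sub_sq]; exact mul_ne_zero h₁ h₂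
  field_simp
  ring

lemma integral_two_div_sq_sub_sq {s : ℝ} (hs : 1 < s) :
    ∫ x in (-1 : ℝ)..1, 2 / (s ^ 2 - x ^ 2) = 2 / s * (log (s + 1) - log (s - 1)) := by
  have hx : ∀ x ∈ Set.uIcc (-1 : ℝ) 1, |x| < s := fun x hx =>
    (abs_le_one_of_mem_uIcc hx).trans_lt hs
  have hne : ∀ x ∈ Set.uIcc (-1 : ℝ) 1, s ^ 2 - x ^ 2 ≠ 0 := fun x hx' => by
    have := sq_lt_sq' (abs_lt.1 (hx x hx')).1 (abs_lt.1 (hx x hx')).2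
    linarith
  rw [intervalIntegral.integral_eq_sub_of_hasDerivAt
    (fun x hx' => hasDerivAt_log_add_sub_log_sub_div (hx x hx'))
    (ContinuousOn.intervalIntegrable (continuousOn_const.div (by fun_prop) hne))]
  have hs₀ : s ≠ 0 := by linarith
  simp only [sub_neg_eq_add, ← sub_eq_add_neg]
  field_simp
  ring

lemma double_integral_one_div_one_sub_mul_add_sq {δ : ℝ} (hδ : 0 < δ) :
    ∫ x in (-1 : ℝ)..1, ∫ y in (-1 : ℝ)..1, 1 / (1 - x * y + δ) ^ 2
      = 2 / (1 + δ) * (log (2 + δ) - log δ) := by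
  have hinner : ∀ x ∈ Set.uIcc (-1 : ℝ) 1,
      ∫ y in (-1 : ℝ)..1, 1 / (1 - x * y + δ) ^ 2 = 2 / ((1 + δ) ^ 2 - x ^ 2) := by
    intro x hx
    have hx' : |x| < 1 + δ := (abs_le_one_of_mem_uIcc hx).trans_lt (lt_add_of_pos_right 1 hδ)
    rw [← integral_one_div_sub_mul_sq hx']
    congr 1 with y
    ring_nf
  rw [intervalIntegral.integral_congr hinner, integral_two_div_sq_sub_sq (by linarith)]
  ring_nf

theorem double_integral_inv_sq_asymptotic :
    Tendsto (fun δ : ℝ =>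
        (1/4) * (∫ x in (-1:ℝ)..1, ∫ y in (-1:ℝ)..1, 1 / (1 - x*y + δ)^2)
          - (-(1/2) * Real.log δ + (1/2) * Real.log 2))
      (nhdsWithin 0 (Set.Ioi 0)) (nhds 0) := by
  have hclosed : ∀ᶠ δ in 𝓝[>] (0 : ℝ),
      (1/4) * (∫ x in (-1:ℝ)..1, ∫ y in (-1:ℝ)..1, 1 / (1 - x*y + δ)^2)
          - (-(1/2) * log δ + (1/2) * log 2)
        = (log (2 + δ) + δ * log δ) / (2 * (1 + δ)) - log 2 / 2 := by
    filter_upwards [self_mem_nhdsWithin] with δ (hδ : 0 < δ)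
    rw [double_integral_one_div_one_sub_mul_add_sq hδ]
    field_simp
    ring
  have hcont : ContinuousAt (fun δ => (log (2 + δ) + δ * log δ) / (2 * (1 + δ))) 0 :=
    (((continuousAt_const.add continuousAt_id).log (by norm_num)).add
      continuous_mul_log.continuousAt).div (by fun_prop) (by norm_num)
  rw [tendsto_congr' hclosed]
  simpa using (hcont.tendsto.mono_left nhdsWithin_le_nhds).sub_const (log 2 / 2)
end

section
/- For integers τ₁ ≥ τ₂ ≥ 0 not both zero, δ > 0, and s > 0, the coefficient ∫_{-1}^{1}∫_{-1}^{1} (1-xy+δ)^{-s} P(x,y) dx dy is nonnegative, where P(x,y) = (1/2)(L_{τ₁+τ₂}(x) L_{τ₁-τ₂}(y) + L_{τ₁+τ₂}(y) L_{τ₁-τ₂}(x)) and L_n denotes the degree-n Legendre polynomial. -/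
open MeasureTheory


/-- The Legendre polynomial `L_n`, via Bonnet's recurrence, as a function on `ℝ`. -/
noncomputable def legendreP : ℕ → ℝ → ℝ
  | 0 => fun _ => 1
  | 1 => fun x => x
  | (n+2) => fun x =>
      ((2*(n:ℝ)+3) * x * legendreP (n+1) x - ((n:ℝ)+1) * legendreP n x) / ((n:ℝ)+2)

/-- The Gegenbauer polynomial `C_n^{3/2}`, via its recurrence, as a function on `ℝ`. -/
noncomputable def gegenbauerC : ℕ → ℝ → ℝ
  | 0 => fun _ => 1
  | 1 => fun x => 3*x
  | (n+2) => fun x =>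
      ((2*(n:ℝ)+5) * x * gegenbauerC (n+1) x - ((n:ℝ)+3) * gegenbauerC n x) / ((n:ℝ)+2)

/-- The generalized Jacobi polynomial `P_τ` on `Gr(2,4)` in the variables `ξ₊, ξ₋`. -/
noncomputable def Pjac (τ₁ τ₂ : ℕ) (x y : ℝ) : ℝ :=
  (legendreP (τ₁+τ₂) x * legendreP (τ₁-τ₂) y
    + legendreP (τ₁+τ₂) y * legendreP (τ₁-τ₂) x) / 2


/-!
Expand the kernel as a binomial series in `xy`: for `|xy| ≤ 1`,
`(1 - xy + δ)^(-s) = ∑ₖ cₖ (xy)^k` with `cₖ = C(s+k-1, k) / (1+δ)^(s+k) > 0` and `∑ₖ cₖ < ∞`.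
Integrating term by term and separating variables, the coefficient becomes
`∑ₖ cₖ Mₖ(τ₁+τ₂) Mₖ(τ₁-τ₂)` with the moments `Mₖ(n) = ∫_{-1}^1 x^k L_n(x) dx`.
Every moment is nonnegative: `M₀(n) ≥ 0` because `∫ L_{n+1} = 0`, and Bonnet's recurrence
writes `x L_{n+1}` as a positive combination of `L_{n+2}` and `L_n`, so nonnegativity passes
from `k` to `k+1`.
-/

lemma legendreP_succ_succ (n : ℕ) (x : ℝ) :
    ((n : ℝ) + 2) * legendreP (n + 2) x
      = (2 * n + 3) * x * legendreP (n + 1) x - (n + 1) * legendreP n x := by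
  rw [legendreP]
  field_simp

lemma continuous_legendreP : ∀ n, Continuous (legendreP n)
  | 0 => continuous_const
  | 1 => continuous_id
  | n + 2 => by
    have := continuous_legendreP n
    have := continuous_legendreP (n + 1)
    unfold legendreP
    fun_prop

lemma legendreP_one : ∀ n, legendreP n 1 = 1
  | 0 => rfl
  | 1 => rfl
  | n + 2 => by
    have h := legendreP_succ_succ n 1
    rw [legendreP_one n, legendreP_one (n + 1)] at h
    have : ((n : ℝ) + 2) ≠ 0 := by positivity
    exact mul_left_cancel₀ this (by linarith)

lemma legendreP_neg_one : ∀ n, legendreP n (-1) = (-1) ^ n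
  | 0 => by simp [legendreP]
  | 1 => by simp [legendreP]
  | n + 2 => by
    have h := legendreP_succ_succ n (-1)
    rw [legendreP_neg_one n, legendreP_neg_one (n + 1)] at h
    have : ((n : ℝ) + 2) ≠ 0 := by positivity
    refine mul_left_cancel₀ this ?_
    rw [h]
    ring

noncomputable def legendrePDeriv : ℕ → ℝ → ℝ
  | 0 => fun _ => 0
  | 1 => fun _ => 1
  | n + 2 => fun x =>
      ((2 * n + 3) * (legendreP (n + 1) x + x * legendrePDeriv (n + 1) x)
        - (n + 1) * legendrePDeriv n x) / (n + 2)

lemma hasDerivAt_legendreP : ∀ n (x : ℝ), HasDerivAt (legendreP n) (legendrePDeriv n x) x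
  | 0, x => hasDerivAt_const x 1
  | 1, x => hasDerivAt_id x
  | n + 2, x => by
    have h := ((((hasDerivAt_id' x).const_mul (2 * (n : ℝ) + 3)).mul
      (hasDerivAt_legendreP (n + 1) x)).sub
      ((hasDerivAt_legendreP n x).const_mul ((n : ℝ) + 1))).div_const ((n : ℝ) + 2)
    exact h.congr_deriv (by simp only [legendrePDeriv]; ring)

lemma legendrePDeriv_succ_succ (n : ℕ) (x : ℝ) :
    ((n : ℝ) + 2) * legendrePDeriv (n + 2) x
      = (2 * n + 3) * (legendreP (n + 1) x + x * legendrePDeriv (n + 1) x)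
        - (n + 1) * legendrePDeriv n x := by
  rw [legendrePDeriv]
  field_simp

lemma mul_legendrePDeriv_succ_sub_and_legendrePDeriv_succ_sub_mul (n : ℕ) (x : ℝ) :
    x * legendrePDeriv (n + 1) x - legendrePDeriv n x = (n + 1) * legendreP (n + 1) x ∧
      legendrePDeriv (n + 1) x - x * legendrePDeriv n x = (n + 1) * legendreP n x := by
  induction n with
  | zero => norm_num [legendreP, legendrePDeriv]
  | succ n ih =>
    obtain ⟨hE, hF⟩ := ih
    have hP := legendreP_succ_succ n x
    have hD := legendrePDeriv_succ_succ n x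
    have hn : ((n : ℝ) + 2) ≠ 0 := by positivity
    push_cast
    constructor
    · refine mul_left_cancel₀ hn ?_
      linear_combination x * hD - (n + 2) * hP + (2 * n + 3) * x * hE - (n + 2) * hF
    · refine mul_left_cancel₀ hn ?_
      linear_combination hD + (n + 1) * hE

lemma legendrePDeriv_succ_succ_sub (n : ℕ) (x : ℝ) :
    legendrePDeriv (n + 2) x - legendrePDeriv n x = (2 * n + 3) * legendreP (n + 1) x := by
  have hE := (mul_legendrePDeriv_succ_sub_and_legendrePDeriv_succ_sub_mul n x).1
  have hF := (mul_legendrePDeriv_succ_sub_and_legendrePDeriv_succ_sub_mul (n + 1) x).2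
  push_cast at hF
  linear_combination hE + hF

lemma integral_legendreP_succ (n : ℕ) : ∫ x in (-1 : ℝ)..1, legendreP (n + 1) x = 0 := by
  have hderiv (x : ℝ) : HasDerivAt (fun x => (legendreP (n + 2) x - legendreP n x) / (2 * n + 3))
      (legendreP (n + 1) x) x := by
    have h := ((hasDerivAt_legendreP (n + 2) x).sub (hasDerivAt_legendreP n x)).div_const
      (2 * (n : ℝ) + 3)
    rwa [legendrePDeriv_succ_succ_sub, mul_div_cancel_left₀ _ (by positivity)] at h
  rw [intervalIntegral.integral_eq_sub_of_hasDerivAt (fun x _ => hderiv x)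
    ((continuous_legendreP _).intervalIntegrable _ _)]
  simp [legendreP_one, legendreP_neg_one, pow_succ]

lemma mul_legendreP_succ (n : ℕ) (x : ℝ) :
    x * legendreP (n + 1) x
      = ((n + 2) * legendreP (n + 2) x + (n + 1) * legendreP n x) / (2 * n + 3) := by
  rw [legendreP_succ_succ]
  field_simp
  ring

noncomputable def legendreMoment (k n : ℕ) : ℝ := ∫ x in (-1 : ℝ)..1, x ^ k * legendreP n x

lemma legendreMoment_zero_nonneg : ∀ n, 0 ≤ legendreMoment 0 n
  | 0 => by simp [legendreMoment, legendreP]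
  | n + 1 => by simp [legendreMoment, integral_legendreP_succ]

lemma legendreMoment_succ_zero (k : ℕ) : legendreMoment (k + 1) 0 = legendreMoment k 1 := by
  simp only [legendreMoment, legendreP, pow_succ, mul_one]

lemma legendreMoment_succ_succ (k n : ℕ) :
    legendreMoment (k + 1) (n + 1)
      = ((n + 2) * legendreMoment k (n + 2) + (n + 1) * legendreMoment k n) / (2 * n + 3) := by
  have hint (m : ℕ) : IntervalIntegrable (fun x : ℝ => x ^ k * legendreP m x) volume (-1) 1 :=
    ((continuous_pow k).mul (continuous_legendreP m)).intervalIntegrable _ _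
  simp only [legendreMoment, ← intervalIntegral.integral_const_mul, ← intervalIntegral.integral_add
    ((hint _).const_mul _) ((hint _).const_mul _), ← intervalIntegral.integral_div]
  congr 1 with x
  rw [pow_succ, mul_assoc, mul_legendreP_succ]
  ring

lemma legendreMoment_nonneg (k n : ℕ) : 0 ≤ legendreMoment k n := by
  induction k generalizing n with
  | zero => exact legendreMoment_zero_nonneg n
  | succ k ih =>
    cases n with
    | zero => exact legendreMoment_succ_zero k ▸ ih 1
    | succ n =>
      rw [legendreMoment_succ_succ]
      have := ih n
      have := ih (n + 2)
      positivity

section SumIntegral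

variable {ι E : Type*} [Countable ι] [NormedAddCommGroup E] [NormedSpace ℝ E]

lemma hasSum_intervalIntegral_of_norm_le {a b : ℝ} {F : ι → ℝ → E} {f : ℝ → E} {B : ι → ℝ}
    (hF : ∀ i, Continuous (F i)) (hB : Summable B)
    (hFB : ∀ i, ∀ t ∈ Set.uIcc a b, ‖F i t‖ ≤ B i)
    (hFf : ∀ t ∈ Set.uIcc a b, HasSum (fun i => F i t) (f t)) :
    HasSum (fun i => ∫ t in a..b, F i t) (∫ t in a..b, f t) :=
  intervalIntegral.hasSum_integral_of_dominated_convergence (fun i _ => B i)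
    (fun i => (hF i).aestronglyMeasurable)
    (fun i => ae_of_all _ fun t ht => hFB i t (Set.uIoc_subset_uIcc ht))
    (ae_of_all _ fun _ _ => hB) intervalIntegrable_const
    (ae_of_all _ fun t ht => hFf t (Set.uIoc_subset_uIcc ht))

lemma hasSum_intervalIntegral_intervalIntegral_of_norm_le {a b c d : ℝ} {F : ι → ℝ → ℝ → E}
    {f : ℝ → ℝ → E} {B : ι → ℝ} (hF : ∀ i, Continuous (Function.uncurry (F i)))
    (hB : Summable B) (hFB : ∀ i, ∀ x ∈ Set.uIcc a b, ∀ y ∈ Set.uIcc c d, ‖F i x y‖ ≤ B i)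
    (hFf : ∀ x ∈ Set.uIcc a b, ∀ y ∈ Set.uIcc c d, HasSum (fun i => F i x y) (f x y)) :
    HasSum (fun i => ∫ x in a..b, ∫ y in c..d, F i x y) (∫ x in a..b, ∫ y in c..d, f x y) := by
  refine hasSum_intervalIntegral_of_norm_le (B := fun i => B i * |d - c|)
    (fun i => intervalIntegral.continuous_parametric_intervalIntegral_of_continuous' (hF i) c d)
    (hB.mul_right _) (fun i x hx => ?_)
    (fun x hx => hasSum_intervalIntegral_of_norm_le (fun i => (hF i).uncurry_left x) hB
      (fun i => hFB i x hx) (hFf x hx))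
  exact intervalIntegral.norm_integral_le_of_norm_le_const
    (fun y hy => hFB i x hx y (Set.uIoc_subset_uIcc hy))

end SumIntegral

lemma integral_integral_pow_mul_Pjac (τ₁ τ₂ k : ℕ) :
    ∫ x in (-1 : ℝ)..1, ∫ y in (-1 : ℝ)..1, (x * y) ^ k * Pjac τ₁ τ₂ x y
      = legendreMoment k (τ₁ + τ₂) * legendreMoment k (τ₁ - τ₂) := by
  set g : ℕ → ℝ → ℝ := fun n x => x ^ k * legendreP n x
  have hg (n : ℕ) : Continuous (g n) := (continuous_pow k).mul (continuous_legendreP n)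
  have hint (n : ℕ) (c : ℝ) : IntervalIntegrable (fun x => c * g n x) volume (-1) 1 :=
    ((continuous_const.mul (hg n))).intervalIntegrable _ _
  have hsep (x y : ℝ) : (x * y) ^ k * Pjac τ₁ τ₂ x y
      = (g (τ₁ + τ₂) x * g (τ₁ - τ₂) y + g (τ₁ - τ₂) x * g (τ₁ + τ₂) y) / 2 := by
    simp only [g, Pjac]
    ring
  have hinner (x : ℝ) : ∫ y in (-1 : ℝ)..1, (x * y) ^ k * Pjac τ₁ τ₂ x y
      = (legendreMoment k (τ₁ - τ₂) * g (τ₁ + τ₂) x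
        + legendreMoment k (τ₁ + τ₂) * g (τ₁ - τ₂) x) / 2 := by
    simp only [hsep, intervalIntegral.integral_div, intervalIntegral.integral_const_mul,
      intervalIntegral.integral_add (hint _ _) (hint _ _), legendreMoment, g]
    ring
  simp only [hinner, intervalIntegral.integral_div, intervalIntegral.integral_const_mul,
    intervalIntegral.integral_add (hint _ _) (hint _ _), legendreMoment, g]
  ring

lemma Ring.choose_add_sub_one_pos {s : ℝ} (hs : 0 < s) (k : ℕ) :
    0 < Ring.choose (s + k - 1) k := by
  have h := Ring.factorial_nsmul_multichoose_eq_ascPochhammer s k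
  rw [Ring.multichoose_eq, Polynomial.ascPochhammer_smeval_eq_eval, nsmul_eq_mul] at h
  exact pos_of_mul_pos_right (h ▸ ascPochhammer_pos k s hs) (Nat.cast_nonneg _)

lemma hasSum_choose_div_rpow_mul_pow {r s u : ℝ} (hr : 0 < r) (hu : |u| < r) :
    HasSum (fun k : ℕ => Ring.choose (s + k - 1) k / r ^ (s + k) * u ^ k) ((r - u) ^ (-s)) := by
  have hur : u / r ∈ Metric.eball (0 : ℝ) 1 := by
    rw [Metric.mem_eball, edist_zero_right, enorm_eq_nnnorm, ← ENNReal.coe_one,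
      ENNReal.coe_lt_coe, ← NNReal.coe_lt_coe]
    simpa [abs_div, abs_of_pos hr, div_lt_one hr] using hu
  have h := ((Real.one_div_one_sub_rpow_hasFPowerSeriesOnBall_zero s).hasSum hur).mul_left
    (r ^ (-s))
  simp only [FormalMultilinearSeries.ofScalars_apply_eq, zero_add, smul_eq_mul] at h
  have hru : 0 < r - u := by linarith [le_abs_self u]
  have hcoeff : (fun k : ℕ => Ring.choose (s + k - 1) k / r ^ (s + k) * u ^ k)
      = fun k : ℕ => r ^ (-s) * (Ring.choose (s + k - 1) k * (u / r) ^ k) := by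
    ext k
    rw [div_pow, Real.rpow_add hr, Real.rpow_natCast, Real.rpow_neg hr.le]
    field_simp
  have hsum : (r - u) ^ (-s) = r ^ (-s) * (1 / (1 - u / r) ^ s) := by
    rw [one_sub_div hr.ne', Real.div_rpow hru.le hr.le, Real.rpow_neg hr.le,
      Real.rpow_neg hru.le]
    have := Real.rpow_pos_of_pos hr s
    have := Real.rpow_pos_of_pos hru s
    field_simp
  rwa [hcoeff, hsum]

lemma hasSum_one_sub_add_rpow_neg {δ s u : ℝ} (hδ : 0 < δ) (hu : |u| ≤ 1) :
    HasSum (fun k : ℕ => Ring.choose (s + k - 1) k / (1 + δ) ^ (s + k) * u ^ k)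
      ((1 - u + δ) ^ (-s)) := by
  rw [show 1 - u + δ = (1 + δ) - u by ring]
  exact hasSum_choose_div_rpow_mul_pow (by positivity) (by linarith)

lemma abs_mul_le_one_of_mem_uIcc {x y : ℝ} (hx : x ∈ Set.uIcc (-1 : ℝ) 1)
    (hy : y ∈ Set.uIcc (-1 : ℝ) 1) : |x * y| ≤ 1 := by
  rw [Set.uIcc_of_le (by norm_num)] at hx hy
  rw [abs_mul]
  exact mul_le_one₀ (abs_le.mpr hx) (abs_nonneg y) (abs_le.mpr hy)

lemma continuous_uncurry_Pjac (τ₁ τ₂ : ℕ) : Continuous (Function.uncurry (Pjac τ₁ τ₂)) := by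
  have := continuous_legendreP (τ₁ + τ₂)
  have := continuous_legendreP (τ₁ - τ₂)
  unfold Pjac Function.uncurry
  fun_prop

theorem jacobi_coefficient_nonneg_general (τ₁ τ₂ : ℕ)
    (δ s : ℝ) (hδ : 0 < δ) (hs : 0 < s) :
    0 ≤ ∫ x in (-1:ℝ)..1, ∫ y in (-1:ℝ)..1, (1 - x*y + δ) ^ (-s) * Pjac τ₁ τ₂ x y := by
  set c : ℕ → ℝ := fun k => Ring.choose (s + k - 1) k / (1 + δ) ^ (s + k)
  have hc (k : ℕ) : 0 < c k := div_pos (Ring.choose_add_sub_one_pos hs k) (by positivity)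
  have hc_summable : Summable c := by
    simpa using (hasSum_one_sub_add_rpow_neg (s := s) hδ abs_one.le).summable
  have hP := continuous_uncurry_Pjac τ₁ τ₂
  obtain ⟨C, hC⟩ := ((isCompact_uIcc (a := (-1 : ℝ)) (b := 1)).prod
    (isCompact_uIcc (a := (-1 : ℝ)) (b := 1))).exists_bound_of_continuousOn hP.continuousOn
  have hsum : HasSum
      (fun k => ∫ x in (-1 : ℝ)..1, ∫ y in (-1 : ℝ)..1, c k * ((x * y) ^ k * Pjac τ₁ τ₂ x y))
      (∫ x in (-1 : ℝ)..1, ∫ y in (-1 : ℝ)..1, (1 - x * y + δ) ^ (-s) * Pjac τ₁ τ₂ x y) := by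
    refine hasSum_intervalIntegral_intervalIntegral_of_norm_le (B := fun k => c k * C)
      (fun k => by fun_prop) (hc_summable.mul_right C) (fun k x hx y hy => ?_)
      (fun x hx y hy => ?_)
    · rw [norm_mul, norm_mul, norm_pow, Real.norm_of_nonneg (hc k).le, Real.norm_eq_abs]
      exact mul_le_mul_of_nonneg_left ((mul_le_of_le_one_left (norm_nonneg _) (pow_le_one₀
        (abs_nonneg _) (abs_mul_le_one_of_mem_uIcc hx hy))).trans (hC (x, y) ⟨hx, hy⟩)) (hc k).le
    · simp_rw [← mul_assoc]
      exact (hasSum_one_sub_add_rpow_neg hδ (abs_mul_le_one_of_mem_uIcc hx hy)).mul_right _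
  rw [← hsum.tsum_eq]
  refine tsum_nonneg fun k => ?_
  simp only [intervalIntegral.integral_const_mul, integral_integral_pow_mul_Pjac]
  have := legendreMoment_nonneg k (τ₁ + τ₂)
  have := legendreMoment_nonneg k (τ₁ - τ₂)
  have := hc k
  positivity

theorem jacobi_coefficient_nonneg (τ₁ τ₂ : ℕ) (hτ : τ₂ ≤ τ₁) (hτ0 : ¬(τ₁ = 0 ∧ τ₂ = 0))
    (δ s : ℝ) (hδ : 0 < δ) (hs : 0 < s) :
    0 ≤ ∫ x in (-1:ℝ)..1, ∫ y in (-1:ℝ)..1, (1 - x*y + δ) ^ (-s) * Pjac τ₁ τ₂ x y :=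
  jacobi_coefficient_nonneg_general τ₁ τ₂ δ s hδ hs
end

section
/- For every k ≥ 1 and variables ξ₊, ξ₋, the identity (1-ξ₊ξ₋)(C_k^{3/2}(ξ₊) C_k^{3/2}(ξ₋) + C_{k-1}^{3/2}(ξ₊) C_{k-1}^{3/2}(ξ₋)) = (k+1)[(k+1)(L_{k+1}(ξ₊)L_{k+1}(ξ₋) - L_k(ξ₊)L_k(ξ₋)) + (L_k(ξ₊) - ξ₋ L_{k+1}(ξ₊)) C_k^{3/2}(ξ₋) + (L_k(ξ₋) - ξ₊ L_{k+1}(ξ₋)) C_k^{3/2}(ξ₊)] holds as polynomials in ξ₊, ξ₋. -/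
/-!
Both sides are rewritten in terms of Gegenbauer polynomials alone through the two relations
`(n+2) L_{n+1} = C_{n+1} - x C_n` and `(n+2) L_{n+2} = x C_{n+1} - C_n` (here `C_n = C_n^{3/2}`),
which follow jointly by induction from the two three-term recurrences. After this substitution
the identity is a polynomial identity in the four numbers `C_k(ξ±)`, `C_{k-1}(ξ±)`.
-/

theorem legendreP_recurrence (n : ℕ) (x : ℝ) :
    ((n:ℝ)+2) * legendreP (n+2) x
      = (2*(n:ℝ)+3) * x * legendreP (n+1) x - ((n:ℝ)+1) * legendreP n x :=
  mul_div_cancel₀ _ (by positivity)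

theorem gegenbauerC_recurrence (n : ℕ) (x : ℝ) :
    ((n:ℝ)+2) * gegenbauerC (n+2) x
      = (2*(n:ℝ)+5) * x * gegenbauerC (n+1) x - ((n:ℝ)+3) * gegenbauerC n x :=
  mul_div_cancel₀ _ (by positivity)

theorem gegenbauerC_sub_eq_legendreP_and_mul_gegenbauerC_sub_eq_legendreP (n : ℕ) (x : ℝ) :
    gegenbauerC (n+1) x - x * gegenbauerC n x = ((n:ℝ)+2) * legendreP (n+1) x ∧
    x * gegenbauerC (n+1) x - gegenbauerC n x = ((n:ℝ)+2) * legendreP (n+2) x := by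
  induction n with
  | zero =>
    simp only [gegenbauerC, legendreP]
    constructor <;> ring
  | succ m ih =>
    obtain ⟨h₁, h₂⟩ := ih
    have hC := gegenbauerC_recurrence m x
    have hL : ((m:ℝ)+3) * legendreP (m+3) x
        = (2*(m:ℝ)+5) * x * legendreP (m+2) x - ((m:ℝ)+2) * legendreP (m+1) x := by
      have := legendreP_recurrence (m+1) x
      push_cast at this
      linear_combination this
    push_cast
    have hm : ((m:ℝ)+2) ≠ 0 := by positivity
    constructor <;> apply mul_left_cancel₀ hm
    · linear_combination hC + ((m:ℝ)+3) * h₂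
    · linear_combination x * hC - ((m:ℝ)+2) * hL + (2*(m:ℝ)+5) * x * h₂ - ((m:ℝ)+2) * h₁

theorem legendreP_succ_eq_gegenbauerC (n : ℕ) (x : ℝ) :
    legendreP (n+1) x = (gegenbauerC (n+1) x - x * gegenbauerC n x) / ((n:ℝ)+2) := by
  rw [eq_div_iff (by positivity),
    (gegenbauerC_sub_eq_legendreP_and_mul_gegenbauerC_sub_eq_legendreP n x).1, mul_comm]

theorem legendreP_succ_succ_eq_gegenbauerC (n : ℕ) (x : ℝ) :
    legendreP (n+2) x = (x * gegenbauerC (n+1) x - gegenbauerC n x) / ((n:ℝ)+2) := by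
  rw [eq_div_iff (by positivity),
    (gegenbauerC_sub_eq_legendreP_and_mul_gegenbauerC_sub_eq_legendreP n x).2, mul_comm]

theorem christoffel_darboux_identity (k : ℕ) (hk : 1 ≤ k) (ξp ξm : ℝ) :
    (1 - ξp*ξm) * (gegenbauerC k ξp * gegenbauerC k ξm
        + gegenbauerC (k-1) ξp * gegenbauerC (k-1) ξm)
      = ((k:ℝ)+1) * (((k:ℝ)+1) * (legendreP (k+1) ξp * legendreP (k+1) ξm
            - legendreP k ξp * legendreP k ξm)
          + (legendreP k ξp - ξm * legendreP (k+1) ξp) * gegenbauerC k ξm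
          + (legendreP k ξm - ξp * legendreP (k+1) ξm) * gegenbauerC k ξp) := by
  obtain ⟨m, rfl⟩ := Nat.exists_eq_add_of_le' hk
  rw [Nat.add_sub_cancel, legendreP_succ_succ_eq_gegenbauerC, legendreP_succ_succ_eq_gegenbauerC,
    legendreP_succ_eq_gegenbauerC, legendreP_succ_eq_gegenbauerC]
  push_cast
  field_simp
  ring
end

section
/- For 0 ≤ s < 4 and integer n > 1 - s/2, as t → 0⁺ one has ∫_{-1}^{1}∫_{-1}^{1} (1-xy+t)^{-s/2-n-1} dx dy ∼ A_{s,n} t^{1-s/2-n}, where A_{s,n} = 2/((n+s/2)(n+s/2-1)). -/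
/-!
With `q = n + s/2 > 1`, the inner integral has the closed form
`φ_t(x) = ((1+t-x)^{-q} - (1+t+x)^{-q}) / (q x)`, an even function of `x`, so the double integral
is `2 ∫₀¹ φ_t`. On `[0, 1]` the slice `φ_t` is squeezed between `((1+t-x)^{-q} - 1) / q` and
`(1+t-x)^{-q} / q + (2/q) (1+t-x)^{1-q} + 2^{q+2}`. The term `(1+t-x)^{-q}` integrates exactly
to `(t^{1-q} - (1+t)^{1-q}) / (q-1) ∼ t^{1-q} / (q-1)`, while
`t^{q-1} ∫₀¹ (1+t-x)^{1-q} = ∫₀¹ (t / (1+t-x))^{q-1} → 0` by dominated convergence, the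
integrand being bounded by `1`.
-/

open MeasureTheory Filter Set intervalIntegral Topology

theorem integral_neg_self_eq_two_smul_of_even {E : Type*} [NormedAddCommGroup E]
    [NormedSpace ℝ E] {f : ℝ → E} (hf : ∀ x, f (-x) = f x) {a : ℝ}
    (hint : IntervalIntegrable f volume 0 a) :
    ∫ x in -a..a, f x = (2:ℝ) • ∫ x in 0..a, f x := by
  have hint' : IntervalIntegrable f volume (-a) 0 := by
    rw [IntervalIntegrable.iff_comp_neg]
    simpa [hf] using hint.symm
  have hsymm : ∫ x in -a..0, f x = ∫ x in 0..a, f x := by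
    simpa [hf] using (integral_comp_neg (a := 0) (b := a) f).symm
  rw [← integral_add_adjacent_intervals hint' hint, hsymm, two_smul]

/-- At `x = 0` division by zero makes this `0` rather than the slice value `2 (1+t)^{-q-1}`;
the discrepancy is on a null set. -/
noncomputable def sliceIntegral (q t x : ℝ) : ℝ :=
  ((1 + t - x) ^ (-q) - (1 + t + x) ^ (-q)) / (q * x)

theorem sliceIntegral_neg (q t x : ℝ) : sliceIntegral q t (-x) = sliceIntegral q t x := by
  unfold sliceIntegral
  rw [sub_neg_eq_add, ← sub_eq_add_neg, mul_neg, div_neg, ← neg_div, neg_sub]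

section

variable {q t x : ℝ}

theorem integral_rpow_eq_sliceIntegral (hq : q ≠ 0) (hx0 : x ≠ 0) (hx : |x| < 1 + t) :
    ∫ y in (-1:ℝ)..1, (1 - x * y + t) ^ (-q - 1) = sliceIntegral q t x := by
  rw [abs_lt] at hx
  have h0 : (0:ℝ) ∉ uIcc (1 + t - x * 1) (1 + t - x * (-1)) :=
    notMem_uIcc_of_lt (by linarith) (by linarith)
  calc ∫ y in (-1:ℝ)..1, (1 - x * y + t) ^ (-q - 1)
      = ∫ y in (-1:ℝ)..1, ((1 + t) - x * y) ^ (-q - 1) := by ring_nf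
    _ = x⁻¹ • ∫ u in (1 + t - x * 1)..(1 + t - x * (-1)), u ^ (-q - 1) :=
        integral_comp_sub_mul (fun u => u ^ (-q - 1)) hx0 _
    _ = sliceIntegral q t x := by
        rw [integral_rpow (Or.inr ⟨by contrapose! hq; linarith, h0⟩), sliceIntegral,
          sub_add_cancel, smul_eq_mul]
        field_simp
        ring_nf

theorem rpow_neg_add_le_rpow_neg_sub (hq : 0 < q) (ht : 0 < t) (hx : x ∈ Icc (0:ℝ) 1) :
    (1 + t + x) ^ (-q) ≤ (1 + t - x) ^ (-q) :=
  Real.rpow_le_rpow_of_nonpos (by linarith [hx.2]) (by linarith [hx.1]) (neg_nonpos.2 hq.le)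

theorem sliceIntegral_nonneg (hq : 0 < q) (ht : 0 < t) (hx : x ∈ Icc (0:ℝ) 1) :
    0 ≤ sliceIntegral q t x :=
  div_nonneg (sub_nonneg.2 (rpow_neg_add_le_rpow_neg_sub hq ht hx)) (mul_nonneg hq.le hx.1)

theorem rpow_neg_sub_one_div_le_sliceIntegral (hq : 0 < q) (ht : 0 < t)
    (hx : x ∈ Icc (0:ℝ) 1) :
    ((1 + t - x) ^ (-q) - 1) / q ≤ sliceIntegral q t x := by
  have hb : (1 + t + x) ^ (-q) ≤ 1 :=
    Real.rpow_le_one_of_one_le_of_nonpos (by linarith [hx.1]) (neg_nonpos.2 hq.le)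
  rcases hx.1.eq_or_lt with rfl | hx0
  · simp only [sliceIntegral, mul_zero, div_zero, sub_zero]
    exact div_nonpos_of_nonpos_of_nonneg (by simpa using hb) hq.le
  · calc ((1 + t - x) ^ (-q) - 1) / q ≤ ((1 + t - x) ^ (-q) - (1 + t + x) ^ (-q)) / q := by
          gcongr
      _ ≤ sliceIntegral q t x :=
          div_le_div_of_nonneg_left (sub_nonneg.2 (rpow_neg_add_le_rpow_neg_sub hq ht hx))
            (by positivity) (mul_le_of_le_one_right hq.le hx.2)

theorem sliceIntegral_le_of_le_half (hq : 0 < q) (ht : 0 < t) (hx : x ∈ Ioc (0:ℝ) (1/2)) :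
    sliceIntegral q t x ≤ 2 ^ (q + 2) := by
  rw [← integral_rpow_eq_sliceIntegral hq.ne' hx.1.ne'
    (by rw [abs_of_pos hx.1]; linarith [hx.2])]
  have hbound : ∀ y ∈ uIoc (-1:ℝ) 1, ‖(1 - x * y + t) ^ (-q - 1)‖ ≤ 2 ^ (q + 1) := by
    intro y hy
    rw [uIoc_of_le (by norm_num)] at hy
    have hxy : 1 / 2 ≤ 1 - x * y + t := by nlinarith [hx.1, hx.2, hy.1, hy.2]
    rw [Real.norm_of_nonneg (Real.rpow_nonneg (by linarith) _)]
    calc (1 - x * y + t) ^ (-q - 1) ≤ (1 / 2) ^ (-q - 1) :=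
          Real.rpow_le_rpow_of_nonpos (by norm_num) hxy (by linarith)
      _ = 2 ^ (q + 1) := by
          rw [one_div, Real.inv_rpow zero_le_two, ← Real.rpow_neg zero_le_two]; ring_nf
  calc _ ≤ ‖∫ y in (-1:ℝ)..1, (1 - x * y + t) ^ (-q - 1)‖ := Real.le_norm_self _
    _ ≤ 2 ^ (q + 1) * |1 - (-1)| := norm_integral_le_of_norm_le_const hbound
    _ = 2 ^ (q + 2) := by
        rw [Real.rpow_add zero_lt_two, Real.rpow_add zero_lt_two]; norm_num; ring

theorem sliceIntegral_le_of_half_le (hq : 0 < q) (ht : 0 < t) (hx : x ∈ Icc (1/2:ℝ) 1) :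
    sliceIntegral q t x ≤ (1 + t - x) ^ (-q) / q + 2 / q * (1 + t - x) ^ (1 - q) := by
  have ha : 0 < 1 + t - x := by linarith [hx.2]
  have hx0 : 0 < x := by linarith [hx.1]
  calc sliceIntegral q t x ≤ (1 + t - x) ^ (-q) / (q * x) :=
        div_le_div_of_nonneg_right (sub_le_self _ (Real.rpow_nonneg (by linarith) _))
          (by positivity)
    _ = (1 + t - x) ^ (-q) / q + (1 - x) / x * (1 + t - x) ^ (-q) / q := by
        field_simp; ring
    _ ≤ (1 + t - x) ^ (-q) / q + 2 * (1 + t - x) * (1 + t - x) ^ (-q) / q := by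
        gcongr
        rw [div_le_iff₀ hx0]
        nlinarith [hx.1, hx.2]
    _ = (1 + t - x) ^ (-q) / q + 2 / q * (1 + t - x) ^ (1 - q) := by
        rw [show (1:ℝ) - q = 1 + -q by ring, Real.rpow_add ha, Real.rpow_one]; ring

theorem sliceIntegral_le (hq : 0 < q) (ht : 0 < t) (hx : x ∈ Icc (0:ℝ) 1) :
    sliceIntegral q t x ≤
      (1 + t - x) ^ (-q) / q + 2 / q * (1 + t - x) ^ (1 - q) + 2 ^ (q + 2) := by
  have ha : 0 < 1 + t - x := by linarith [hx.2]
  have h1 : 0 ≤ (1 + t - x) ^ (-q) / q + 2 / q * (1 + t - x) ^ (1 - q) := by positivity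
  rcases le_or_gt x (1/2) with hx2 | hx2
  · rcases hx.1.eq_or_lt with rfl | hx0
    · simp only [sliceIntegral, mul_zero, div_zero]; positivity
    · linarith [sliceIntegral_le_of_le_half hq ht ⟨hx0, hx2⟩]
  · linarith [sliceIntegral_le_of_half_le hq ht ⟨hx2.le, hx.2⟩,
      Real.rpow_nonneg zero_le_two (q + 2)]

theorem intervalIntegrable_one_add_sub_rpow (ht : 0 < t) (r : ℝ) :
    IntervalIntegrable (fun x => (1 + t - x) ^ r) volume 0 1 := by
  refine ContinuousOn.intervalIntegrable (ContinuousOn.rpow_const (by fun_prop) fun x hx => ?_)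
  rw [uIcc_of_le zero_le_one] at hx
  exact Or.inl (by linarith [hx.2])

theorem integral_one_add_sub_rpow_neg (ht : 0 < t) (hq : q ≠ 1) :
    ∫ x in (0:ℝ)..1, (1 + t - x) ^ (-q) =
      (t ^ (1 - q) - (1 + t) ^ (1 - q)) / (q - 1) := by
  have h0 : (0:ℝ) ∉ uIcc (1 + t - 1) (1 + t - 0) :=
    notMem_uIcc_of_lt (by linarith) (by linarith)
  rw [integral_comp_sub_left (fun u => u ^ (-q)),
    integral_rpow (Or.inr ⟨by contrapose! hq; linarith, h0⟩), show 1 + t - 1 = t by ring,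
    sub_zero, show -q + 1 = 1 - q by ring, ← neg_div_neg_eq, neg_sub, neg_sub]

theorem intervalIntegrable_sliceIntegral (hq : 0 < q) (ht : 0 < t) :
    IntervalIntegrable (sliceIntegral q t) volume 0 1 := by
  refine IntervalIntegrable.mono_fun'
    (g := fun x => (1 + t - x) ^ (-q) / q + 2 / q * (1 + t - x) ^ (1 - q) + 2 ^ (q + 2))
    ((((intervalIntegrable_one_add_sub_rpow ht _).div_const _).add
      ((intervalIntegrable_one_add_sub_rpow ht _).const_mul _)).add intervalIntegrable_const)
    (Measurable.aestronglyMeasurable (by unfold sliceIntegral; fun_prop)) ?_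
  rw [uIoc_of_le zero_le_one]
  filter_upwards [ae_restrict_mem measurableSet_Ioc] with x hx
  rw [Real.norm_of_nonneg (sliceIntegral_nonneg hq ht (Ioc_subset_Icc_self hx))]
  exact sliceIntegral_le hq ht (Ioc_subset_Icc_self hx)

theorem integral_integral_eq_two_mul_integral_sliceIntegral (hq : 0 < q) (ht : 0 < t) :
    ∫ x in (-1:ℝ)..1, ∫ y in (-1:ℝ)..1, (1 - x * y + t) ^ (-q - 1) =
      2 * ∫ x in (0:ℝ)..1, sliceIntegral q t x := by
  rw [← smul_eq_mul, ← integral_neg_self_eq_two_smul_of_even (sliceIntegral_neg q t)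
    (intervalIntegrable_sliceIntegral hq ht)]
  refine integral_congr_ae ?_
  filter_upwards [Measure.ae_ne volume 0] with x hx0 hx
  rw [uIoc_of_le (by norm_num)] at hx
  exact integral_rpow_eq_sliceIntegral hq.ne' hx0
    (abs_lt.2 ⟨by linarith [hx.1], by linarith [hx.2]⟩)

theorem le_integral_sliceIntegral (hq : 0 < q) (ht : 0 < t) :
    ((∫ x in (0:ℝ)..1, (1 + t - x) ^ (-q)) - 1) / q ≤
      ∫ x in (0:ℝ)..1, sliceIntegral q t x := by
  have hA := intervalIntegrable_one_add_sub_rpow ht (-q)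
  have h := integral_mono_on zero_le_one ((hA.sub intervalIntegrable_const).div_const q)
    (intervalIntegrable_sliceIntegral hq ht)
    (fun x hx => rpow_neg_sub_one_div_le_sliceIntegral hq ht hx)
  rwa [intervalIntegral.integral_div, intervalIntegral.integral_sub hA intervalIntegrable_const,
    intervalIntegral.integral_const, sub_zero, one_smul] at h

theorem integral_sliceIntegral_le (hq : 0 < q) (ht : 0 < t) :
    ∫ x in (0:ℝ)..1, sliceIntegral q t x ≤
      (∫ x in (0:ℝ)..1, (1 + t - x) ^ (-q)) / q +
        2 / q * (∫ x in (0:ℝ)..1, (1 + t - x) ^ (1 - q)) + 2 ^ (q + 2) := by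
  have hA := (intervalIntegrable_one_add_sub_rpow ht (-q)).div_const q
  have hB := (intervalIntegrable_one_add_sub_rpow ht (1 - q)).const_mul (2 / q)
  have h := integral_mono_on zero_le_one (intervalIntegrable_sliceIntegral hq ht)
    ((hA.add hB).add intervalIntegrable_const) (fun x hx => sliceIntegral_le hq ht hx)
  rwa [intervalIntegral.integral_add (hA.add hB) intervalIntegrable_const,
    intervalIntegral.integral_add hA hB, intervalIntegral.integral_div,
    intervalIntegral.integral_const_mul, intervalIntegral.integral_const, sub_zero,
    one_smul] at h

theorem tendsto_rpow_sub_one_mul_integral_rpow_neg (hq : 1 < q) :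
    Tendsto (fun t => t ^ (q - 1) * ∫ x in (0:ℝ)..1, (1 + t - x) ^ (-q)) (𝓝[>] 0)
      (𝓝 (1 / (q - 1))) := by
  have hcont : ContinuousAt (fun t : ℝ => (1 - t ^ (q - 1) * (1 + t) ^ (1 - q)) / (q - 1)) 0 := by
    refine ((continuousAt_const.sub ?_).div_const _)
    exact (continuousAt_id.rpow_const (Or.inr (by linarith))).mul
      ((continuousAt_const.add continuousAt_id).rpow_const (Or.inl (by norm_num)))
  have h := hcont.tendsto.mono_left (nhdsWithin_le_nhds (s := Ioi 0))
  rw [Real.zero_rpow (by linarith), zero_mul, sub_zero] at h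
  refine h.congr' ?_
  filter_upwards [self_mem_nhdsWithin] with t (ht : 0 < t)
  rw [integral_one_add_sub_rpow_neg ht hq.ne', mul_div_assoc', mul_sub, ← Real.rpow_add ht]
  simp

theorem tendsto_rpow_mul_integral_rpow_neg {p : ℝ} (hp : 0 < p) :
    Tendsto (fun t => t ^ p * ∫ x in (0:ℝ)..1, (1 + t - x) ^ (-p)) (𝓝[>] 0) (𝓝 0) := by
  have hDC : Tendsto (fun t => ∫ x in (0:ℝ)..1, (t / (1 + t - x)) ^ p) (𝓝[>] 0)
      (𝓝 (∫ x in (0:ℝ)..1, (0:ℝ))) := by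
    refine tendsto_integral_filter_of_dominated_convergence (fun _ => 1) ?_ ?_
      intervalIntegrable_const ?_
    · exact Eventually.of_forall fun t => (by fun_prop : Measurable _).aestronglyMeasurable
    · filter_upwards [self_mem_nhdsWithin] with t (ht : 0 < t)
      refine Eventually.of_forall fun x hx => ?_
      rw [uIoc_of_le zero_le_one] at hx
      have ha : 0 < 1 + t - x := by linarith [hx.2]
      rw [Real.norm_of_nonneg (by positivity)]
      exact Real.rpow_le_one (by positivity) ((div_le_one ha).2 (by linarith [hx.2])) hp.le
    · filter_upwards [Measure.ae_ne volume 1] with x hx1 hx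
      rw [uIoc_of_le zero_le_one] at hx
      have hx' : x < 1 := lt_of_le_of_ne hx.2 hx1
      have hcont : ContinuousAt (fun t : ℝ => (t / (1 + t - x)) ^ p) 0 :=
        ((continuousAt_id.div (by fun_prop) (by simp; linarith)).rpow_const (Or.inr hp.le))
      simpa [Real.zero_rpow hp.ne'] using hcont.tendsto.mono_left nhdsWithin_le_nhds
  rw [intervalIntegral.integral_zero] at hDC
  refine hDC.congr' ?_
  filter_upwards [self_mem_nhdsWithin] with t (ht : 0 < t)
  rw [← intervalIntegral.integral_const_mul]
  refine integral_congr fun x hx => ?_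
  rw [uIcc_of_le zero_le_one] at hx
  have ha : 0 < 1 + t - x := by linarith [hx.2]
  rw [Real.div_rpow ht.le ha.le, Real.rpow_neg ha.le, div_eq_mul_inv]

theorem tendsto_rpow_sub_one_mul_integral_sliceIntegral (hq : 1 < q) :
    Tendsto (fun t => t ^ (q - 1) * ∫ x in (0:ℝ)..1, sliceIntegral q t x) (𝓝[>] 0)
      (𝓝 (1 / (q * (q - 1)))) := by
  have hq0 : 0 < q := by linarith
  have hA := tendsto_rpow_sub_one_mul_integral_rpow_neg hq
  have hB := tendsto_rpow_mul_integral_rpow_neg (p := q - 1) (by linarith)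
  simp only [neg_sub] at hB
  have hT : Tendsto (fun t : ℝ => t ^ (q - 1)) (𝓝[>] 0) (𝓝 0) := by
    simpa [Real.zero_rpow (by linarith : q - 1 ≠ 0)] using
      (Real.continuousAt_rpow_const 0 (q - 1) (Or.inr (by linarith))).tendsto.mono_left
        (nhdsWithin_le_nhds (s := Ioi 0))
  have hlim : 1 / (q * (q - 1)) = (1 / (q - 1) - 0) / q := by
    rw [sub_zero, div_div, mul_comm]
  have hlim' : 1 / (q * (q - 1)) = 1 / (q - 1) / q + 2 / q * 0 + 2 ^ (q + 2) * 0 := by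
    rw [mul_zero, mul_zero, add_zero, add_zero, div_div, mul_comm]
  refine tendsto_of_tendsto_of_tendsto_of_le_of_le' (hlim ▸ (hA.sub hT).div_const q)
    (hlim' ▸ ((hA.div_const q).add (hB.const_mul (2 / q))).add (hT.const_mul _)) ?_ ?_
  all_goals filter_upwards [self_mem_nhdsWithin] with t (ht : 0 < t)
  · have h := mul_le_mul_of_nonneg_left (le_integral_sliceIntegral hq0 ht)
      (Real.rpow_nonneg ht.le (q - 1))
    convert h using 1
    ring
  · have h := mul_le_mul_of_nonneg_left (integral_sliceIntegral_le hq0 ht)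
      (Real.rpow_nonneg ht.le (q - 1))
    convert h using 1
    ring

theorem tendsto_integral_integral_div (hq : 1 < q) :
    Tendsto (fun t => (∫ x in (-1:ℝ)..1, ∫ y in (-1:ℝ)..1, (1 - x * y + t) ^ (-q - 1)) /
      ((2 / (q * (q - 1))) * t ^ (1 - q))) (𝓝[>] 0) (𝓝 1) := by
  have hq0 : 0 < q := by linarith
  have h := (tendsto_rpow_sub_one_mul_integral_sliceIntegral hq).const_mul (q * (q - 1))
  rw [mul_one_div_cancel (by nlinarith)] at h
  refine h.congr' ?_
  filter_upwards [self_mem_nhdsWithin] with t (ht : 0 < t)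
  rw [integral_integral_eq_two_mul_integral_sliceIntegral hq0 ht,
    show 1 - q = -(q - 1) by ring, Real.rpow_neg ht.le]
  have : q - 1 ≠ 0 := by linarith
  have : t ^ (q - 1) ≠ 0 := by positivity
  field_simp

end

theorem double_integral_asymptotics_general (s : ℝ)
    (n : ℕ) (hn : (1:ℝ) - s/2 < n) :
    Tendsto (fun t : ℝ =>
        (∫ x in (-1:ℝ)..1, ∫ y in (-1:ℝ)..1, (1 - x*y + t) ^ (-(s/2) - n - 1)) /
          ((2 / (((n:ℝ) + s/2) * ((n:ℝ) + s/2 - 1))) * t ^ (1 - s/2 - (n:ℝ))))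
      (nhdsWithin 0 (Set.Ioi 0)) (nhds 1) := by
  rw [show -(s/2) - (n:ℝ) - 1 = -((n:ℝ) + s/2) - 1 by ring,
    show (1:ℝ) - s/2 - n = 1 - ((n:ℝ) + s/2) by ring]
  exact tendsto_integral_integral_div (by linarith)

theorem double_integral_asymptotics (s : ℝ) (hs0 : 0 ≤ s) (hs4 : s < 4)
    (n : ℕ) (hn : (1:ℝ) - s/2 < n) :
    Tendsto (fun t : ℝ =>
        (∫ x in (-1:ℝ)..1, ∫ y in (-1:ℝ)..1, (1 - x*y + t) ^ (-(s/2) - n - 1)) /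
          ((2 / (((n:ℝ) + s/2) * ((n:ℝ) + s/2 - 1))) * t ^ (1 - s/2 - (n:ℝ))))
      (nhdsWithin 0 (Set.Ioi 0)) (nhds 1) :=
  double_integral_asymptotics_general s n hn
end

section
/- Let F: [-1,1]² → ℝ be continuous with pointwise-convergent expansion F = ∑_τ ĉ(τ) P_τ in the bivariate polynomials P_τ(x,y) = (1/2)(L_{τ₁+τ₂}(x)L_{τ₁-τ₂}(y) + L_{τ₁+τ₂}(y)L_{τ₁-τ₂}(x)) indexed by partitions τ=(τ₁,τ₂), τ₁ ≥ τ₂ ≥ 0, such that ĉ(τ) ≥ 0 for all τ ≠ (0,0). Then for any points ξ₊(i,j), ξ₋(i,j) ∈ [-1,1] (1 ≤ i,j ≤ N) for which each moment M_τ = ∑_{i,j} P_τ(ξ₊(i,j), ξ₋(i,j)) is nonnegative and the diagonal values satisfy ξ₊(i,i)=ξ₋(i,i)=1, one has ∑_{i≠j} F(ξ₊(i,j), ξ₋(i,j)) ≥ ĉ(0,0) N² − F(1,1) N. -/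
theorem Pjac_zero_zero (x y : ℝ) : Pjac 0 0 x y = 1 := by
  norm_num [Pjac, legendreP]

theorem Finset.sum_filter_ne_add_sum_diag {α M : Type*} [Fintype α] [DecidableEq α]
    [AddCommMonoid M] (f : α × α → M) :
    ∑ p ∈ Finset.univ.filter (fun p : α × α => p.1 ≠ p.2), f p + ∑ i, f (i, i) = ∑ p, f p := by
  have hoff : Finset.univ.filter (fun p : α × α => p.1 ≠ p.2) = Finset.univ.offDiag := by
    ext p; simp
  rw [hoff, add_comm, ← Finset.sum_diag, ← Finset.sum_union (Finset.disjoint_diag_offDiag _),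
    Finset.diag_union_offDiag, Finset.univ_product_univ]

theorem hasSum_mul_finsetSum {β ι R : Type*} [NonUnitalNonAssocSemiring R] [TopologicalSpace R]
    [ContinuousAdd R] {c : β → R} {g : β → ι → R} {a : ι → R} (s : Finset ι)
    (h : ∀ i ∈ s, HasSum (fun b => c b * g b i) (a i)) :
    HasSum (fun b => c b * ∑ i ∈ s, g b i) (∑ i ∈ s, a i) := by
  simpa only [Finset.mul_sum] using hasSum_sum h

/-- The linear-programming bound: evaluating the expansion of `F` on a configuration with
nonnegative moments, every term but the constant one is nonnegative. -/
theorem coeff_zero_mul_card_le_sum {ι : Type*} [Fintype ι] (F : ℝ → ℝ → ℝ) (c : ℕ × ℕ → ℝ)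
    (hexp : ∀ x ∈ Set.Icc (-1:ℝ) 1, ∀ y ∈ Set.Icc (-1:ℝ) 1,
      HasSum (fun τ : {p : ℕ × ℕ // p.2 ≤ p.1} => c τ.1 * Pjac τ.1.1 τ.1.2 x y) (F x y))
    (hc : ∀ τ : ℕ × ℕ, τ.2 ≤ τ.1 → τ ≠ (0,0) → 0 ≤ c τ)
    (x y : ι → ℝ) (hmem : ∀ k, x k ∈ Set.Icc (-1:ℝ) 1 ∧ y k ∈ Set.Icc (-1:ℝ) 1)
    (hM : ∀ τ : ℕ × ℕ, τ.2 ≤ τ.1 → 0 ≤ ∑ k, Pjac τ.1 τ.2 (x k) (y k)) :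
    c (0,0) * Fintype.card ι ≤ ∑ k, F (x k) (y k) := by
  have hsum : HasSum (fun τ : {p : ℕ × ℕ // p.2 ≤ p.1} =>
      c τ.1 * ∑ k, Pjac τ.1.1 τ.1.2 (x k) (y k)) (∑ k, F (x k) (y k)) :=
    hasSum_mul_finsetSum _ fun k _ => hexp _ (hmem k).1 _ (hmem k).2
  have hterm := le_hasSum hsum ⟨(0,0), le_rfl⟩ fun τ hτ =>
    mul_nonneg (hc τ.1 τ.2 fun h => hτ (Subtype.ext h)) (hM τ.1 τ.2)
  simpa [Pjac_zero_zero] using hterm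

theorem lp_lower_bound_general (N : ℕ) (F : ℝ → ℝ → ℝ) (c : ℕ × ℕ → ℝ)
    (hexp : ∀ x ∈ Set.Icc (-1:ℝ) 1, ∀ y ∈ Set.Icc (-1:ℝ) 1,
      HasSum (fun τ : {p : ℕ × ℕ // p.2 ≤ p.1} =>
        c τ.1 * Pjac τ.1.1 τ.1.2 x y) (F x y))
    (hc : ∀ τ : ℕ × ℕ, τ.2 ≤ τ.1 → τ ≠ (0,0) → 0 ≤ c τ)
    (ξp ξm : Fin N → Fin N → ℝ)
    (hmem : ∀ i j, ξp i j ∈ Set.Icc (-1:ℝ) 1 ∧ ξm i j ∈ Set.Icc (-1:ℝ) 1)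
    (hM : ∀ τ : ℕ × ℕ, τ.2 ≤ τ.1 →
      0 ≤ ∑ i, ∑ j, Pjac τ.1 τ.2 (ξp i j) (ξm i j))
    (hdiag : ∀ i, ξp i i = 1 ∧ ξm i i = 1) :
    c (0,0) * (N:ℝ)^2 - F 1 1 * N ≤
      ∑ p ∈ Finset.univ.filter (fun p : Fin N × Fin N => p.1 ≠ p.2),
        F (ξp p.1 p.2) (ξm p.1 p.2) := by
  have hall := coeff_zero_mul_card_le_sum F c hexp hc (fun p : Fin N × Fin N => ξp p.1 p.2)
    (fun p => ξm p.1 p.2) (fun p => hmem p.1 p.2)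
    (fun τ hτ => by simpa only [Fintype.sum_prod_type] using hM τ hτ)
  have hdiag_sum : ∑ i : Fin N, F (ξp i i) (ξm i i) = F 1 1 * N := by
    simp [hdiag, mul_comm]
  rw [← Finset.sum_filter_ne_add_sum_diag, hdiag_sum] at hall
  simp only [Fintype.card_prod, Fintype.card_fin, Nat.cast_mul] at hall
  rw [sq]
  linarith

theorem lp_lower_bound (N : ℕ) (F : ℝ → ℝ → ℝ) (c : ℕ × ℕ → ℝ)
    (hF : ContinuousOn (fun p : ℝ × ℝ => F p.1 p.2)
      (Set.Icc (-1:ℝ) 1 ×ˢ Set.Icc (-1:ℝ) 1))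
    (hexp : ∀ x ∈ Set.Icc (-1:ℝ) 1, ∀ y ∈ Set.Icc (-1:ℝ) 1,
      HasSum (fun τ : {p : ℕ × ℕ // p.2 ≤ p.1} =>
        c τ.1 * Pjac τ.1.1 τ.1.2 x y) (F x y))
    (hc : ∀ τ : ℕ × ℕ, τ.2 ≤ τ.1 → τ ≠ (0,0) → 0 ≤ c τ)
    (ξp ξm : Fin N → Fin N → ℝ)
    (hmem : ∀ i j, ξp i j ∈ Set.Icc (-1:ℝ) 1 ∧ ξm i j ∈ Set.Icc (-1:ℝ) 1)
    (hM : ∀ τ : ℕ × ℕ, τ.2 ≤ τ.1 →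
      0 ≤ ∑ i, ∑ j, Pjac τ.1 τ.2 (ξp i j) (ξm i j))
    (hdiag : ∀ i, ξp i i = 1 ∧ ξm i i = 1) :
    c (0,0) * (N:ℝ)^2 - F 1 1 * N ≤
      ∑ p ∈ Finset.univ.filter (fun p : Fin N × Fin N => p.1 ≠ p.2),
        F (ξp p.1 p.2) (ξm p.1 p.2) :=
  lp_lower_bound_general N F c hexp hc ξp ξm hmem hM hdiag
end
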